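/- arXiv:2411.16263 — 2 statements merged into one kernel-verified Lean document; each statement's English description precedes it below -/
import Mathlib

section
/- Gentle Measurement Lemma (Lemma 2 of the paper): Let ρ be a d×d complex density matrix and let Λ be a d×d complex matrix with 0 ≤ Λ ≤ I in the Loewner order. Suppose Re(tr(Λρ)) ≥ 1 − δ for some δ with 0 ≤ δ ≤ 1, and tr(Λρ) ≠ 0. Then the normalized post-measurement state ρ̃ = (√Λ · ρ · √Λ) / tr(Λρ), where √Λ is the positive semidefinite square root of Λ, satisfies ‖ρ − ρ̃‖₁ ≤ 2√δ. -/
/-!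
Put `t = tr(Λρ)`, `A = √Λ / √t` and `G = √ρ`, so that the normalized post-measurement state is
`AρA`. For a Hermitian involution `X` with `X (ρ - AρA) = |ρ - AρA|`, the cross terms cancel in
`Re tr (X (ρ - AρA)) = Re tr ((G - AG)ᴴ X (G + AG))`, and Cauchy–Schwarz for the Frobenius inner
product bounds this by `√((tr ρ + tr AρA)² - 4 (Re tr Aρ)²) = 2 √(1 - (Re tr Aρ)²)`.
Finally `Λ ≤ √Λ` because `0 ≤ Λ ≤ 1`, hence `Re tr (Aρ) ≥ t / √t = √t ≥ √(1 - δ)`.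
-/

open Matrix ComplexOrder

/-- The positive semidefinite square root of a positive semidefinite matrix
(the definition `Matrix.PosSemidef.sqrt` of the older Mathlib, since removed). -/
noncomputable def Matrix.PosSemidef.sqrt {n 𝕜 : Type*} [Fintype n] [DecidableEq n] [RCLike 𝕜]
    {A : Matrix n n 𝕜} (hA : A.PosSemidef) : Matrix n n 𝕜 :=
  hA.1.eigenvectorUnitary.1 * diagonal ((↑) ∘ Real.sqrt ∘ hA.1.eigenvalues) *
  (star hA.1.eigenvectorUnitary : Matrix n n 𝕜)

/-- The trace norm of a complex square matrix: the trace of the positive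
semidefinite square root of `Aᴴ * A`. -/
noncomputable def traceNorm {d : ℕ} (A : Matrix (Fin d) (Fin d) ℂ) : ℝ :=
  ((Matrix.posSemidef_conjTranspose_mul_self A).sqrt.trace).re

open scoped MatrixOrder

lemma CFC.le_sqrt_of_le_one {A : Type*} [PartialOrder A] [Ring A] [StarRing A] [TopologicalSpace A]
    [StarOrderedRing A] [Algebra ℝ A] [ContinuousFunctionalCalculus ℝ A IsSelfAdjoint]
    [NonnegSpectrumClass ℝ A] [IsSemitopologicalRing A] [T2Space A]
    {a : A} (ha₀ : 0 ≤ a) (ha₁ : a ≤ 1) : a ≤ CFC.sqrt a := by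
  rw [CFC.sqrt_eq_real_sqrt a, cfcₙ_eq_cfc]
  nth_rw 1 [← cfc_id' ℝ a]
  refine cfc_mono fun x hx => ?_
  have hx₀ : 0 ≤ x := spectrum_nonneg_of_nonneg ha₀ hx
  have hx₁ : x ≤ 1 := (CFC.le_one_iff a).mp ha₁ x hx
  exact (Real.le_sqrt hx₀ hx₀).mpr (by nlinarith)

namespace Matrix

variable {n 𝕜 : Type*} [Fintype n] [DecidableEq n] [RCLike 𝕜]

lemma PosSemidef.sqrt_eq_cfcSqrt {A : Matrix n n 𝕜} (hA : A.PosSemidef) :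
    hA.sqrt = CFC.sqrt A := by
  rw [CFC.sqrt_eq_cfc, cfc_nnreal_eq_real _ A hA.nonneg, hA.1.cfc_eq]
  simp only [IsHermitian.cfc, Unitary.conjStarAlgAut_apply, PosSemidef.sqrt]
  congr 3
  funext i
  simp [Real.coe_sqrt, hA.eigenvalues_nonneg i]

lemma trace_mul_nonneg {A B : Matrix n n 𝕜} (hA : 0 ≤ A) (hB : 0 ≤ B) : 0 ≤ (A * B).trace := by
  obtain ⟨G, rfl⟩ := CStarAlgebra.nonneg_iff_eq_star_mul_self.mp hB
  rw [← Matrix.mul_assoc, trace_mul_comm, ← Matrix.mul_assoc]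
  exact (hA.posSemidef.mul_mul_conjTranspose_same G).trace_nonneg

lemma trace_mul_le_trace_mul_of_le {A B ρ : Matrix n n 𝕜} (hAB : A ≤ B) (hρ : 0 ≤ ρ) :
    (A * ρ).trace ≤ (B * ρ).trace := by
  simpa only [sub_mul, trace_sub, sub_nonneg] using trace_mul_nonneg (sub_nonneg.mpr hAB) hρ

lemma re_trace_conjTranspose_mul_le (P Q : Matrix n n 𝕜) :
    RCLike.re (Pᴴ * Q).trace ≤ √(RCLike.re (Pᴴ * P).trace) * √(RCLike.re (Qᴴ * Q).trace) := by
  let := (1 : Matrix n n 𝕜).toMatrixSeminormedAddCommGroup PosSemidef.one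
  let := (1 : Matrix n n 𝕜).toMatrixInnerProductSpace PosSemidef.one
  have inner_eq (x y : Matrix n n 𝕜) : inner 𝕜 x y = (y * xᴴ).trace :=
    congrArg (fun M => (M * xᴴ).trace) (Matrix.mul_one y)
  have h := re_inner_le_norm (𝕜 := 𝕜) Qᴴ Pᴴ
  rwa [norm_eq_sqrt_re_inner (𝕜 := 𝕜) Qᴴ, norm_eq_sqrt_re_inner (𝕜 := 𝕜) Pᴴ, mul_comm,
    inner_eq, inner_eq, inner_eq, conjTranspose_conjTranspose, conjTranspose_conjTranspose] at h

lemma exists_involution_mul_eq_cfcAbs {M : Matrix n n 𝕜} (hM : IsSelfAdjoint M) :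
    ∃ X : Matrix n n 𝕜, IsSelfAdjoint X ∧ X * X = 1 ∧ X * M = CFC.abs M := by
  let sgn : ℝ → ℝ := fun x => if 0 ≤ x then 1 else -1
  have hcont (f : ℝ → ℝ) : ContinuousOn f (spectrum ℝ M) :=
    (spectrum ℝ M).toFinite.continuousOn f
  refine ⟨cfc sgn M, cfc_predicate sgn M, ?_, ?_⟩
  · rw [← cfc_mul sgn sgn M (hcont _) (hcont _), ← cfc_const_one ℝ M]
    refine cfc_congr fun x _ => ?_
    by_cases hx : 0 ≤ x <;> simp [sgn, hx]
  · nth_rw 2 [← cfc_id' ℝ M]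
    rw [← cfc_mul sgn _ M (hcont _) (hcont _), CFC.abs_eq_cfc_norm M]
    refine cfc_congr fun x _ => ?_
    by_cases hx : 0 ≤ x
    · simp [sgn, hx, abs_of_nonneg hx]
    · simp [sgn, hx, abs_of_neg (not_le.mp hx)]

lemma trace_conjTranspose_mul_self_add_mul {A G ρ : Matrix n n 𝕜} (hA : IsSelfAdjoint A)
    (hG : IsSelfAdjoint G) (hGG : G * G = ρ) :
    ((G + A * G)ᴴ * (G + A * G)).trace = ρ.trace + 2 * (A * ρ).trace + (A * ρ * A).trace := by
  have hAH : Aᴴ = A := hA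
  have hGH : Gᴴ = G := hG
  have hexp : (G + A * G)ᴴ * (G + A * G) = G * G + 2 • (G * A * G) + G * (A * A) * G := by
    simp only [conjTranspose_add, conjTranspose_mul, hAH, hGH]; noncomm_ring
  rw [hexp, trace_add, trace_add, trace_smul, nsmul_eq_mul, Nat.cast_ofNat, trace_mul_cycle G A,
    trace_mul_cycle G (A * A), trace_mul_cycle A ρ, hGG, trace_mul_comm ρ, trace_mul_comm ρ]

lemma re_trace_mul_sub_conj_eq {X A G ρ : Matrix n n 𝕜} (hX : IsSelfAdjoint X)
    (hA : IsSelfAdjoint A) (hG : IsSelfAdjoint G) (hGG : G * G = ρ) :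
    RCLike.re (X * (ρ - A * ρ * A)).trace =
      RCLike.re ((G - A * G)ᴴ * (X * (G + A * G))).trace := by
  have hAH : Aᴴ = A := hA
  have hGH : Gᴴ = G := hG
  have hXH : Xᴴ = X := hX
  have hexp : (G - A * G)ᴴ * (X * (G + A * G)) =
      G * X * G + G * (X * A) * G - G * (A * X) * G - G * (A * X * A) * G := by
    simp only [conjTranspose_sub, conjTranspose_mul, hGH, hAH]; noncomm_ring
  have trace_conj (Y : Matrix n n 𝕜) : (G * Y * G).trace = (Y * ρ).trace := by
    rw [trace_mul_cycle, hGG, trace_mul_comm]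
  -- the cross terms `tr (X A ρ)` and `tr (A X ρ)` are complex conjugates, so they cancel in `re`
  have hcross : star (X * A * ρ).trace = (A * X * ρ).trace := by
    rw [← trace_conjTranspose, conjTranspose_mul, conjTranspose_mul, hXH, hAH, ← hGG,
      conjTranspose_mul, hGH, trace_mul_comm, Matrix.mul_assoc]
  rw [hexp, trace_sub, trace_sub, trace_add, trace_conj, trace_conj, trace_conj, trace_conj,
    Matrix.mul_sub, trace_sub, ← Matrix.mul_assoc, ← Matrix.mul_assoc, trace_mul_cycle (X * A),
    ← Matrix.mul_assoc A X A, ← hcross]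
  simp only [map_sub, map_add, RCLike.star_def, RCLike.conj_re]
  ring

lemma re_trace_mul_sub_conj_le {X A ρ : Matrix n n 𝕜} (hX : IsSelfAdjoint X) (hXX : X * X = 1)
    (hA : IsSelfAdjoint A) (hρ : 0 ≤ ρ) :
    RCLike.re (X * (ρ - A * ρ * A)).trace ≤
      √(RCLike.re (ρ.trace + (A * ρ * A).trace) ^ 2 - 4 * RCLike.re (A * ρ).trace ^ 2) := by
  set G := CFC.sqrt ρ
  have hG : IsSelfAdjoint G := (CFC.sqrt_nonneg ρ).isSelfAdjoint
  have hGG : G * G = ρ := CFC.sqrt_mul_sqrt_self ρ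
  set P := G - A * G
  set Q := G + A * G
  have hPP : (Pᴴ * P).trace = ρ.trace - 2 * (A * ρ).trace + (A * ρ * A).trace := by
    simpa only [neg_mul, mul_neg, neg_neg, trace_neg, ← sub_eq_add_neg] using
      trace_conjTranspose_mul_self_add_mul hA.neg hG hGG
  have hXQ : (X * Q)ᴴ * (X * Q) = Qᴴ * Q := by
    rw [conjTranspose_mul, show Xᴴ = X from hX, Matrix.mul_assoc, ← Matrix.mul_assoc X, hXX,
      Matrix.one_mul]
  have hPP_nonneg : 0 ≤ RCLike.re (Pᴴ * P).trace :=
    (RCLike.nonneg_iff.mp (posSemidef_conjTranspose_mul_self P).trace_nonneg).1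
  calc RCLike.re (X * (ρ - A * ρ * A)).trace
      = RCLike.re (Pᴴ * (X * Q)).trace := re_trace_mul_sub_conj_eq hX hA hG hGG
    _ ≤ √(RCLike.re (Pᴴ * P).trace) * √(RCLike.re (Qᴴ * Q).trace) := by
      simpa only [hXQ] using re_trace_conjTranspose_mul_le P (X * Q)
    _ = _ := by
      rw [← Real.sqrt_mul hPP_nonneg, hPP, trace_conjTranspose_mul_self_add_mul hA hG hGG]
      congr 1
      simp only [map_add, map_sub, RCLike.ofNat_mul_re]
      ring

lemma re_trace_cfcAbs_sub_conj_le {A ρ : Matrix n n 𝕜} (hA : IsSelfAdjoint A) (hρ : 0 ≤ ρ) :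
    RCLike.re (CFC.abs (ρ - A * ρ * A)).trace ≤
      √(RCLike.re (ρ.trace + (A * ρ * A).trace) ^ 2 - 4 * RCLike.re (A * ρ).trace ^ 2) := by
  have hM : IsSelfAdjoint (ρ - A * ρ * A) :=
    hρ.isSelfAdjoint.sub (hρ.isSelfAdjoint.conjugate_self hA)
  obtain ⟨X, hX, hXX, hXM⟩ := exists_involution_mul_eq_cfcAbs hM
  rw [← hXM]
  exact re_trace_mul_sub_conj_le hX hXX hA hρ

lemma re_trace_cfcAbs_sub_normalized_sqrt_conj_le {Λ ρ : Matrix n n 𝕜} (hρ : 0 ≤ ρ)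
    (hρtr : ρ.trace = 1) (hΛ₀ : 0 ≤ Λ) (hΛ₁ : Λ ≤ 1) (ht : 0 < (Λ * ρ).trace) :
    RCLike.re (CFC.abs (ρ - ((Λ * ρ).trace)⁻¹ • (CFC.sqrt Λ * ρ * CFC.sqrt Λ))).trace ≤
      2 * √(1 - RCLike.re (Λ * ρ).trace) := by
  obtain ⟨t, ht_pos, ht_eq⟩ := RCLike.pos_iff_exists_ofReal.mp ht
  set S := CFC.sqrt Λ
  set A : Matrix n n 𝕜 := (√t)⁻¹ • S
  have hA : IsSelfAdjoint A := .smul (.all _) (CFC.sqrt_nonneg Λ).isSelfAdjoint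
  have hAρA : A * ρ * A = ((Λ * ρ).trace)⁻¹ • (S * ρ * S) := by
    rw [← ht_eq, ← RCLike.ofReal_inv, ← RCLike.real_smul_eq_coe_smul]
    simp only [A, Matrix.smul_mul, Matrix.mul_smul, smul_smul, ← mul_inv,
      Real.mul_self_sqrt ht_pos.le]
  have hAρA_trace : (A * ρ * A).trace = 1 := by
    rw [hAρA, trace_smul, trace_mul_cycle, CFC.sqrt_mul_sqrt_self Λ hΛ₀, smul_eq_mul,
      inv_mul_cancel₀ ht.ne']
  have hAρ_trace : √t ≤ RCLike.re (A * ρ).trace := by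
    have ht_le : t ≤ RCLike.re (S * ρ).trace := by
      simpa only [← ht_eq, RCLike.ofReal_re] using RCLike.re_le_re
        (trace_mul_le_trace_mul_of_le (CFC.le_sqrt_of_le_one hΛ₀ hΛ₁) hρ)
    calc √t = t / √t := Real.div_sqrt.symm
      _ ≤ RCLike.re (S * ρ).trace / √t := by gcongr
      _ = RCLike.re (A * ρ).trace := by
        rw [Matrix.smul_mul, trace_smul, RCLike.smul_re, inv_mul_eq_div]
  rw [← hAρA, ← ht_eq, RCLike.ofReal_re]
  calc RCLike.re (CFC.abs (ρ - A * ρ * A)).trace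
      ≤ √(RCLike.re (ρ.trace + (A * ρ * A).trace) ^ 2 - 4 * RCLike.re (A * ρ).trace ^ 2) :=
        re_trace_cfcAbs_sub_conj_le hA hρ
    _ ≤ √(2 ^ 2 * (1 - t)) := by
        refine Real.sqrt_le_sqrt ?_
        rw [hρtr, hAρA_trace, one_add_one_eq_two, RCLike.ofNat_re]
        nlinarith [Real.sq_sqrt ht_pos.le, Real.sqrt_nonneg t]
    _ = 2 * √(1 - t) := by rw [Real.sqrt_mul (sq_nonneg 2), Real.sqrt_sq zero_le_two]

end Matrix

lemma traceNorm_eq_re_trace_cfcAbs {d : ℕ} (A : Matrix (Fin d) (Fin d) ℂ) :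
    traceNorm A = (CFC.abs A).trace.re := by
  rw [traceNorm, PosSemidef.sqrt_eq_cfcSqrt]
  rfl

theorem gentle_measurement_general {d : ℕ} (ρ Λ : Matrix (Fin d) (Fin d) ℂ)
    (hρ : ρ.PosSemidef) (hρtr : ρ.trace = 1)
    (hΛ : Λ.PosSemidef) (hΛle : (1 - Λ).PosSemidef)
    (δ : ℝ)
    (htr : 1 - δ ≤ ((Λ * ρ).trace).re)
    (hne : (Λ * ρ).trace ≠ 0) :
    traceNorm (ρ - ((Λ * ρ).trace)⁻¹ • (hΛ.sqrt * ρ * hΛ.sqrt)) ≤ 2 * Real.sqrt δ := by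
  have ht : 0 < (Λ * ρ).trace := (trace_mul_nonneg hΛ.nonneg hρ.nonneg).lt_of_ne' hne
  rw [traceNorm_eq_re_trace_cfcAbs, hΛ.sqrt_eq_cfcSqrt]
  calc _ ≤ 2 * √(1 - ((Λ * ρ).trace).re) :=
        re_trace_cfcAbs_sub_normalized_sqrt_conj_le hρ.nonneg hρtr hΛ.nonneg (le_iff.mpr hΛle) ht
    _ ≤ 2 * √δ := by gcongr; linarith

/-- **Gentle Measurement Lemma.** If `ρ` is a density matrix, `0 ≤ Λ ≤ 1` and
`Re tr(Λρ) ≥ 1 - δ` with `tr(Λρ) ≠ 0`, then the normalized post-measurement state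
`(√Λ ρ √Λ) / tr(Λρ)` is `2√δ`-close to `ρ` in trace norm. -/
theorem gentle_measurement {d : ℕ} (ρ Λ : Matrix (Fin d) (Fin d) ℂ)
    (hρ : ρ.PosSemidef) (hρtr : ρ.trace = 1)
    (hΛ : Λ.PosSemidef) (hΛle : (1 - Λ).PosSemidef)
    (δ : ℝ) (hδ0 : 0 ≤ δ) (hδ1 : δ ≤ 1)
    (htr : 1 - δ ≤ ((Λ * ρ).trace).re)
    (hne : (Λ * ρ).trace ≠ 0) :
    traceNorm (ρ - ((Λ * ρ).trace)⁻¹ • (hΛ.sqrt * ρ * hΛ.sqrt)) ≤ 2 * Real.sqrt δ :=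
  gentle_measurement_general ρ Λ hρ hρtr hΛ hΛle δ htr hne
end

section
/- Quantum Packing Lemma (Lemma 1 of the paper): Let 𝒳 be a finite set, p a probability mass function on 𝒳, and {ρ_x}_{x∈𝒳} a family of d×d complex density matrices with average state ρ = ∑_{x∈𝒳} p(x)·ρ_x. Suppose there exist d×d complex matrices Π and Π_x (x ∈ 𝒳), each satisfying 0 ≤ Π ≤ I and 0 ≤ Π_x ≤ I, and constants ε ∈ (0,1) and real numbers 0 < h < H, such that for all x ∈ 𝒳: (i) Re tr(Π ρ_x) ≥ 1 − ε; (ii) Re tr(Π_x ρ_x) ≥ 1 − ε; (iii) Re tr(Π_x) ≤ 2^h; and (iv) Π ρ Π ≤ 2^{−H} Π in the Loewner order. Then for every positive integer M there exists, for each codebook c : {1,…,M} → 𝒳, a POVM {Λ^c_m}_{m=1,…,M} (each Λ^c_m positive semidefinite with ∑_{m=1}^M Λ^c_m ≤ I in the Loewner order) such that the expected average error probability over a codebook with M codewords drawn i.i.d. according to p satisfies ∑_{c : {1,…,M} → 𝒳} (∏_{m=1}^M p(c(m))) · (1 − (1/M) ∑_{m=1}^M Re tr(Λ^c_m · ρ_{c(m)}))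 ≤ 2(ε + 2√ε) + 4·M·2^{−(H−h)}. -/
/-!
Decode with the pretty good measurement of the operators `Γ x = Π Π_x Π`, regularised by
`κ = 2^{-(H-h)}`: for a codebook `c`, `Λ_m = N^{-1/2} Γ_{c m} N^{-1/2}` with
`N = κ + ∑ m, Γ_{c m}`. The Hayashi–Nagaoka inequality bounds the error operator `1 - Λ_m` by
`2 (1 - Γ_{c m}) + 4 (κ + ∑_{m' ≠ m} Γ_{c m'})`. On `ρ_{c m}` the first term is at most
`2 (ε + 2√ε)`, because `Π` and `Π_x` both nearly accept `ρ_x` (Cauchy–Schwarz). Distinct codewords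
are independent, so each interference term has expectation `tr (Π ρ̄ Π Π̄) ≤ 2^{-H} tr Π̄ ≤ κ`,
where `Π̄` is the average of the `Π_x`. The regulariser, which makes `N` invertible, costs one more
`4 κ`, for a total of `2 (ε + 2√ε) + 4 M κ`.
-/

open Matrix ComplexOrder
open scoped MatrixOrder Matrix.Norms.L2Operator Ring

section CStarAlgebra
variable {A : Type*} [CStarAlgebra A] [PartialOrder A] [StarOrderedRing A]

lemma mul_self_le_self {a : A} (h0 : 0 ≤ a) (h1 : a ≤ 1) : a * a ≤ a := by
  obtain ⟨s, hs, rfl⟩ : ∃ s, 0 ≤ s ∧ s * s = a :=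
    ⟨CFC.sqrt a, CFC.sqrt_nonneg a, CFC.sqrt_mul_sqrt_self a h0⟩
  calc s * s * (s * s) = s * (s * s) * s := by noncomm_ring
    _ ≤ s * 1 * s := conjugate_le_conjugate_of_nonneg h1 hs
    _ = s * s := by rw [mul_one]

lemma conjugate_le_one {a b : A} (ha0 : 0 ≤ a) (ha1 : a ≤ 1) (hb : b ≤ 1) : a * b * a ≤ 1 :=
  calc a * b * a ≤ a * 1 * a := conjugate_le_conjugate_of_nonneg hb ha0
    _ = a * a := by rw [mul_one]
    _ ≤ 1 := (mul_self_le_self ha0 ha1).trans ha1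

theorem hayashi_nagaoka {S T : A} (hS0 : 0 ≤ S) (hS1 : S ≤ 1) (hT : 0 ≤ T)
    (hST : IsStrictlyPositive (S + T)) :
    1 - CFC.conjSqrt (S + T)⁻¹ʳ S ≤ 2 • (1 - S) + 4 • T := by
  set a := CFC.sqrt (S + T)
  set q := a⁻¹ʳ
  have ha : 0 ≤ a := CFC.sqrt_nonneg _
  have haa : a * a = S + T := CFC.sqrt_mul_sqrt_self _ hST.nonneg
  have hunit : IsUnit a := hST.isUnit_cfcSqrt
  have hqa : q * a = 1 := Ring.inverse_mul_cancel a hunit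
  have haq : a * q = 1 := Ring.mul_inverse_cancel a hunit
  have hq : IsSelfAdjoint q := (IsSelfAdjoint.of_nonneg ha).ringInverse
  have hSa : S ≤ a := by
    have h := CFC.sqrt_le_sqrt (S * S) (a * a) (calc
      S * S ≤ S := mul_self_le_self hS0 hS1
      _ ≤ S + T := le_add_of_nonneg_right hT
      _ = a * a := haa.symm)
    rwa [CFC.sqrt_mul_self S hS0, CFC.sqrt_mul_self a ha] at h
  have key : 2 • (1 - S) + 4 • T - (1 - q * S * q)
      = (q - 2) * T * (q - 2) + 2 • ((q - 1) * S * (q - 1)) + 4 • (a - S) := by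
    rw [show T = a * a - S by rw [haa]; abel]
    have hqaaq : q * (a * a) * q = 1 := by rw [← mul_assoc, hqa, one_mul, haq]
    have hqaa : q * (a * a) = a := by rw [← mul_assoc, hqa, one_mul]
    have haaq : a * a * q = a := by rw [mul_assoc, haq, mul_one]
    have hexpand : (q - 2) * (a * a - S) * (q - 2) = q * (a * a) * q - 2 • (q * (a * a))
        - 2 • (a * a * q) + 4 • (a * a) - q * S * q + 2 • (q * S) + 2 • (S * q) - 4 • S := by
      noncomm_ring
    rw [hexpand, hqaaq, hqaa, haaq]
    noncomm_ring
  rw [CFC.conjSqrt_apply, CFC.sqrt_ringInverse, ← sub_nonneg, key]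
  have h1 : 0 ≤ (q - 2) * T * (q - 2) := (hq.sub (.ofNat 2)).conjugate_nonneg hT
  have h2 : 0 ≤ (q - 1) * S * (q - 1) := (hq.sub (.one A)).conjugate_nonneg hS0
  have h3 : 0 ≤ a - S := sub_nonneg.mpr hSa
  exact add_nonneg (add_nonneg h1 (nsmul_nonneg h2 2)) (nsmul_nonneg h3 4)

variable {ι : Type*} {κ : ℝ} {Γ : ι → A}

lemma isStrictlyPositive_algebraMap_add_sum (hκ : 0 < κ) (hΓ : ∀ i, 0 ≤ Γ i) (s : Finset ι) :
    IsStrictlyPositive (algebraMap ℝ A κ + ∑ j ∈ s, Γ j) :=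
  (isStrictlyPositive_algebraMap hκ).add_nonneg (Finset.sum_nonneg fun j _ => hΓ j)

variable [Fintype ι]

/-- `N^{-1/2} Γ_i N^{-1/2}` with `N = κ + ∑ j, Γ j`. -/
noncomputable def prettyGoodMeasurement (κ : ℝ) (Γ : ι → A) (i : ι) : A :=
  CFC.conjSqrt (algebraMap ℝ A κ + ∑ j, Γ j)⁻¹ʳ (Γ i)

lemma prettyGoodMeasurement_nonneg {i : ι} (hΓ : 0 ≤ Γ i) : 0 ≤ prettyGoodMeasurement κ Γ i := by
  simpa [prettyGoodMeasurement] using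
    CFC.conjSqrt_le_conjSqrt (c := (algebraMap ℝ A κ + ∑ j, Γ j)⁻¹ʳ) hΓ

lemma sum_prettyGoodMeasurement_le_one (hκ : 0 < κ) (hΓ : ∀ i, 0 ≤ Γ i) :
    ∑ i, prettyGoodMeasurement κ Γ i ≤ 1 := by
  have hN := isStrictlyPositive_algebraMap_add_sum hκ hΓ Finset.univ
  calc ∑ i, prettyGoodMeasurement κ Γ i
      = CFC.conjSqrt (algebraMap ℝ A κ + ∑ j, Γ j)⁻¹ʳ (∑ j, Γ j) := (map_sum _ _ _).symm
    _ ≤ CFC.conjSqrt (algebraMap ℝ A κ + ∑ j, Γ j)⁻¹ʳ (algebraMap ℝ A κ + ∑ j, Γ j) :=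
        CFC.conjSqrt_le_conjSqrt (le_add_of_nonneg_left (algebraMap_nonneg A hκ.le))
    _ = 1 := CFC.conjSqrt_ringInverse_self _ hN

lemma one_sub_prettyGoodMeasurement_le [DecidableEq ι] (hκ : 0 < κ) (hΓ0 : ∀ i, 0 ≤ Γ i)
    {i : ι} (hΓ1 : Γ i ≤ 1) :
    1 - prettyGoodMeasurement κ Γ i
      ≤ 2 • (1 - Γ i) + 4 • (algebraMap ℝ A κ + ∑ j ∈ Finset.univ.erase i, Γ j) := by
  have hsplit : algebraMap ℝ A κ + ∑ j, Γ j
      = Γ i + (algebraMap ℝ A κ + ∑ j ∈ Finset.univ.erase i, Γ j) := by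
    rw [← Finset.add_sum_erase _ _ (Finset.mem_univ i)]; abel
  have hT := isStrictlyPositive_algebraMap_add_sum hκ hΓ0 (Finset.univ.erase i)
  rw [prettyGoodMeasurement, hsplit]
  refine hayashi_nagaoka (hΓ0 i) hΓ1 hT.nonneg ?_
  rw [← hsplit]
  exact isStrictlyPositive_algebraMap_add_sum hκ hΓ0 _
end CStarAlgebra

section Trace
variable {n : Type*} [Fintype n]

lemma re_trace_mul_nonneg {A B : Matrix n n ℂ} (hA : 0 ≤ A) (hB : 0 ≤ B) :
    0 ≤ (A * B).trace.re := by
  classical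
  obtain ⟨s, rfl⟩ := CStarAlgebra.nonneg_iff_eq_star_mul_self.mp hA
  rw [mul_assoc, trace_mul_comm]
  exact (Complex.nonneg_iff.mp (star_right_conjugate_nonneg hB s).posSemidef.trace_nonneg).1

lemma re_trace_mul_le_re_trace_mul {A B ρ : Matrix n n ℂ} (hAB : A ≤ B) (hρ : 0 ≤ ρ) :
    (A * ρ).trace.re ≤ (B * ρ).trace.re := by
  have := re_trace_mul_nonneg (sub_nonneg.mpr hAB) hρ
  rwa [sub_mul, trace_sub, Complex.sub_re, sub_nonneg] at this

lemma sq_re_trace_conjTranspose_mul_mul_le {ρ : Matrix n n ℂ} (hρ : 0 ≤ ρ) (X Y : Matrix n n ℂ) :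
    (Xᴴ * Y * ρ).trace.re ^ 2 ≤ (Xᴴ * X * ρ).trace.re * (Yᴴ * Y * ρ).trace.re := by
  let _ := ρ.toMatrixSeminormedAddCommGroup hρ.posSemidef
  let _ := ρ.toMatrixInnerProductSpace hρ.posSemidef
  have hinner : ∀ U V : Matrix n n ℂ, inner ℂ U V = (Uᴴ * V * ρ).trace := fun U V => by
    rw [mul_assoc, trace_mul_comm]; rfl
  have h := inner_mul_inner_self_le (𝕜 := ℂ) X Y
  rw [← norm_inner_symm X Y, ← sq] at h
  simp only [hinner, RCLike.re_to_complex] at h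
  exact (sq_le_sq.mpr (Complex.abs_re_le_norm _ |>.trans_eq (abs_norm _).symm)).trans h

lemma re_trace_conjTranspose_mul {ρ : Matrix n n ℂ} (hρ : ρ.IsHermitian) (Z : Matrix n n ℂ) :
    (Zᴴ * ρ).trace.re = (Z * ρ).trace.re := by
  rw [show Zᴴ * ρ = (ρ * Z)ᴴ by rw [conjTranspose_mul, hρ.eq], trace_conjTranspose,
    trace_mul_comm, Complex.star_def, Complex.conj_re]

lemma re_trace_sum_smul_mul_sum_smul {𝒳 : Type*} [Fintype 𝒳] (p : 𝒳 → ℝ)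
    (A B : 𝒳 → Matrix n n ℂ) :
    ((∑ x, p x • A x) * ∑ y, p y • B y).trace.re = ∑ x, ∑ y, p x * p y * (A x * B y).trace.re := by
  simp only [Finset.sum_mul, Finset.mul_sum, smul_mul_smul, trace_sum, trace_smul, Complex.re_sum,
    Complex.smul_re, smul_eq_mul]
  exact Finset.sum_comm

variable [DecidableEq n]

lemma re_trace_mul_le_one {A ρ : Matrix n n ℂ} (hA : A ≤ 1) (hρ : 0 ≤ ρ) (htr : ρ.trace = 1) :
    (A * ρ).trace.re ≤ 1 := by
  simpa [htr] using re_trace_mul_le_re_trace_mul hA hρ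

lemma neg_sqrt_le_re_trace_conjTranspose_mul_mul {ρ X Y : Matrix n n ℂ} (hρ : 0 ≤ ρ)
    (htr : ρ.trace = 1) (hX : Xᴴ * X ≤ 1) {ε : ℝ} (hY : (Yᴴ * Y * ρ).trace.re ≤ ε) :
    -√ε ≤ (Xᴴ * Y * ρ).trace.re := by
  have hY0 := re_trace_mul_nonneg (star_mul_self_nonneg Y) hρ
  have hXY : (Xᴴ * X * ρ).trace.re * (Yᴴ * Y * ρ).trace.re ≤ ε :=
    (mul_le_of_le_one_left hY0 (re_trace_mul_le_one hX hρ htr)).trans hY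
  exact neg_le_of_abs_le
    (Real.abs_le_sqrt ((sq_re_trace_conjTranspose_mul_mul_le hρ X Y).trans hXY))

theorem sub_two_mul_sqrt_le_re_trace_conj_mul {P B ρ : Matrix n n ℂ} (hP0 : 0 ≤ P) (hP1 : P ≤ 1)
    (hB0 : 0 ≤ B) (hB1 : B ≤ 1) (hρ : 0 ≤ ρ) (htr : ρ.trace = 1) {ε : ℝ}
    (hPρ : 1 - ε ≤ (P * ρ).trace.re) (hBρ : 1 - ε ≤ (B * ρ).trace.re) :
    1 - ε - 2 * √ε ≤ (P * B * P * ρ).trace.re := by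
  have hPsa : Pᴴ = P := (IsSelfAdjoint.of_nonneg hP0).star_eq
  have hBsa : Bᴴ = B := (IsSelfAdjoint.of_nonneg hB0).star_eq
  have hBB : Bᴴ * B ≤ 1 := by rw [hBsa]; exact (mul_self_le_self hB0 hB1).trans hB1
  have hBP : (B * P)ᴴ * (B * P) ≤ 1 := by
    rw [conjTranspose_mul, hBsa, hPsa, mul_assoc, ← mul_assoc B, ← mul_assoc]
    exact conjugate_le_one hP0 hP1 (by rwa [hBsa] at hBB)
  have hPε : ((P - 1)ᴴ * (P - 1) * ρ).trace.re ≤ ε := by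
    have hsq : (P - 1)ᴴ * (P - 1) ≤ 1 - P := by
      simpa [hPsa, show (1 - P) * (1 - P) = (P - 1) * (P - 1) by noncomm_ring] using
        mul_self_le_self (sub_nonneg.mpr hP1) (sub_le_self _ hP0)
    refine (re_trace_mul_le_re_trace_mul hsq hρ).trans ?_
    rw [sub_mul, one_mul, trace_sub, Complex.sub_re, htr, Complex.one_re]
    linarith
  -- `PBP = B + B(P - 1) + (P - 1)BP`, and Cauchy–Schwarz bounds both corrections below by `-√ε`.
  have hdecomp : (P * B * P * ρ).trace.re = (B * ρ).trace.re + (Bᴴ * (P - 1) * ρ).trace.re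
      + ((B * P)ᴴ * (P - 1) * ρ).trace.re := by
    rw [← re_trace_conjTranspose_mul hρ.posSemidef.isHermitian ((B * P)ᴴ * (P - 1)),
      ← Complex.add_re, ← Complex.add_re, ← trace_add, ← trace_add, ← add_mul, ← add_mul,
      conjTranspose_mul, conjTranspose_conjTranspose, conjTranspose_sub, conjTranspose_one, hBsa,
      hPsa]
    congr 3
    noncomm_ring
  linarith [neg_sqrt_le_re_trace_conjTranspose_mul_mul hρ htr hBB hPε,
    neg_sqrt_le_re_trace_conjTranspose_mul_mul hρ htr hBP hPε]

lemma re_trace_conj_mul_le {P Q ρ : Matrix n n ℂ} (hP1 : P ≤ 1) (hQ : 0 ≤ Q)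
    {c : ℝ} (hc : 0 ≤ c) (hρ : P * ρ * P ≤ c • P) :
    (P * Q * P * ρ).trace.re ≤ c * Q.trace.re := by
  have hcycle : (P * Q * P * ρ).trace = (P * ρ * P * Q).trace := by
    rw [mul_assoc, trace_mul_comm, mul_assoc, mul_assoc, mul_assoc]
  calc (P * Q * P * ρ).trace.re = (P * ρ * P * Q).trace.re := by rw [hcycle]
    _ ≤ (c • P * Q).trace.re := re_trace_mul_le_re_trace_mul hρ hQ
    _ = c * (P * Q).trace.re := by rw [smul_mul_assoc, trace_smul, Complex.smul_re, smul_eq_mul]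
    _ ≤ c * (1 * Q).trace.re := mul_le_mul_of_nonneg_left (re_trace_mul_le_re_trace_mul hP1 hQ) hc
    _ = c * Q.trace.re := by rw [one_mul]

lemma sum_sum_mul_re_trace_conj_mul_le {𝒳 : Type*} [Fintype 𝒳] {p : 𝒳 → ℝ}
    (hp0 : ∀ x, 0 ≤ p x) (hp1 : ∑ x, p x = 1) {P : Matrix n n ℂ} (Q ρ : 𝒳 → Matrix n n ℂ)
    (hP1 : P ≤ 1) (hQ : ∀ x, 0 ≤ Q x) {c D : ℝ} (hc : 0 ≤ c)
    (hρ : P * (∑ x, p x • ρ x) * P ≤ c • P) (hQtr : ∀ x, (Q x).trace.re ≤ D) :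
    ∑ x, ∑ y, p x * p y * (P * Q x * P * ρ y).trace.re ≤ c * D := by
  have hconj : ∑ x, p x • (P * Q x * P) = P * (∑ x, p x • Q x) * P := by
    simp only [Finset.mul_sum, Finset.sum_mul, mul_smul_comm, smul_mul_assoc]
  have hQtr' : (∑ x, p x • Q x).trace.re ≤ D := by
    simp only [trace_sum, trace_smul, Complex.re_sum, Complex.smul_re, smul_eq_mul]
    calc ∑ x, p x * (Q x).trace.re ≤ ∑ x, p x * D :=
          Finset.sum_le_sum fun x _ => mul_le_mul_of_nonneg_left (hQtr x) (hp0 x)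
      _ = D := by rw [← Finset.sum_mul, hp1, one_mul]
  rw [← re_trace_sum_smul_mul_sum_smul, hconj]
  exact (re_trace_conj_mul_le hP1 (Finset.sum_nonneg fun x _ => smul_nonneg (hp0 x) (hQ x))
    hc hρ).trans (mul_le_mul_of_nonneg_left hQtr' hc)

lemma one_sub_re_trace_prettyGoodMeasurement_mul_le {ι : Type*} [Fintype ι] [DecidableEq ι]
    {κ : ℝ} {Γ : ι → Matrix n n ℂ} (hκ : 0 < κ) (hΓ0 : ∀ i, 0 ≤ Γ i) {i : ι} (hΓ1 : Γ i ≤ 1)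
    {ρ : Matrix n n ℂ} (hρ : 0 ≤ ρ) (htr : ρ.trace = 1) :
    1 - (prettyGoodMeasurement κ Γ i * ρ).trace.re
      ≤ 2 * (1 - (Γ i * ρ).trace.re) + 4 * (κ + ∑ j ∈ Finset.univ.erase i, (Γ j * ρ).trace.re) := by
  have h := re_trace_mul_le_re_trace_mul (one_sub_prettyGoodMeasurement_le hκ hΓ0 hΓ1) hρ
  simp only [sub_mul, add_mul, one_mul, smul_mul_assoc, Finset.sum_mul, trace_sub, trace_add,
    trace_smul, trace_sum, Algebra.algebraMap_eq_smul_one, htr, Complex.sub_re, Complex.add_re,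
    Complex.re_sum, Complex.smul_re, Complex.one_re, smul_eq_mul, mul_one] at h
  simp only [nsmul_eq_mul, Nat.cast_ofNat] at h
  linarith
end Trace

section Codebook
variable {ι 𝒳 : Type*} [Fintype ι] [DecidableEq ι] [Fintype 𝒳] {p : 𝒳 → ℝ}

lemma sum_prod_mul_prod (w : ι → 𝒳 → ℝ) :
    ∑ c : ι → 𝒳, (∏ j, p (c j)) * ∏ j, w j (c j) = ∏ j, ∑ x, p x * w j x := by
  rw [Fintype.prod_sum]; simp only [Finset.prod_mul_distrib]

lemma sum_prod_mul_apply (hp : ∑ x, p x = 1) (i : ι) (f : 𝒳 → ℝ) :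
    ∑ c : ι → 𝒳, (∏ j, p (c j)) * f (c i) = ∑ x, p x * f x := by
  have h := sum_prod_mul_prod (p := p) fun j x => if j = i then f x else 1
  simp only [Fintype.prod_ite_eq'] at h
  rw [h, ← Fintype.prod_ite_eq' i fun _ => ∑ x, p x * f x]
  refine Finset.prod_congr rfl fun j _ => ?_
  split_ifs <;> simp [hp]

lemma sum_prod_mul_apply_mul_apply (hp : ∑ x, p x = 1) {i k : ι} (hik : i ≠ k)
    (f g : 𝒳 → ℝ) :
    ∑ c : ι → 𝒳, (∏ j, p (c j)) * (f (c i) * g (c k))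
      = (∑ x, p x * f x) * ∑ y, p y * g y := by
  have h := sum_prod_mul_prod (p := p)
    fun j x => (if j = i then f x else 1) * (if j = k then g x else 1)
  simp only [Finset.prod_mul_distrib, Fintype.prod_ite_eq'] at h
  rw [h, ← Fintype.prod_ite_eq' i fun _ => ∑ x, p x * f x,
    ← Fintype.prod_ite_eq' k fun _ => ∑ y, p y * g y, ← Finset.prod_mul_distrib]
  refine Finset.prod_congr rfl fun j _ => ?_
  split_ifs with hi hk <;> simp_all

lemma sum_prod_mul_apply_apply (hp : ∑ x, p x = 1) {i k : ι} (hik : i ≠ k)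
    (g : 𝒳 → 𝒳 → ℝ) :
    ∑ c : ι → 𝒳, (∏ j, p (c j)) * g (c i) (c k) = ∑ x, ∑ y, p x * p y * g x y := by
  classical
  have hδ : ∀ c : ι → 𝒳, g (c i) (c k)
      = ∑ x, ∑ y, g x y * ((if c i = x then 1 else 0) * (if c k = y then 1 else 0)) := by
    intro c; simp [Finset.sum_ite_eq]
  simp_rw [hδ, Finset.mul_sum]
  rw [Finset.sum_comm]
  refine Finset.sum_congr rfl fun x _ => ?_
  rw [Finset.sum_comm]
  refine Finset.sum_congr rfl fun y _ => ?_
  have h : ∑ c : ι → 𝒳, (∏ j, p (c j)) * ((if c i = x then 1 else 0) * (if c k = y then 1 else 0))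
      = p x * p y :=
    (sum_prod_mul_apply_mul_apply hp hik (fun z => if z = x then 1 else 0)
      (fun z => if z = y then 1 else 0)).trans (by simp)
  rw [← h, Finset.sum_mul]
  exact Finset.sum_congr rfl fun c _ => by ring

lemma sum_prod_mul_add_sum_erase (hp : ∑ x, p x = 1) (i : ι) (f : 𝒳 → ℝ) (g : 𝒳 → 𝒳 → ℝ) :
    ∑ c : ι → 𝒳, (∏ j, p (c j)) * (f (c i) + ∑ j ∈ Finset.univ.erase i, g (c j) (c i))
      = ∑ x, p x * f x + ((Fintype.card ι : ℝ) - 1) * ∑ x, ∑ y, p x * p y * g x y := by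
  simp_rw [mul_add, Finset.sum_add_distrib]
  conv_lhs => simp only [Finset.mul_sum]
  rw [sum_prod_mul_apply hp, Finset.sum_comm, Finset.sum_congr rfl fun j hj =>
    sum_prod_mul_apply_apply hp (Finset.ne_of_mem_erase hj) g, Finset.sum_const,
    Finset.card_erase_of_mem (Finset.mem_univ i), Finset.card_univ, nsmul_eq_mul,
    Nat.cast_pred (Fintype.card_pos_iff.mpr ⟨i⟩)]

theorem sum_prod_mul_one_sub_average_le [Nonempty ι] (hp0 : ∀ x, 0 ≤ p x) (hp : ∑ x, p x = 1)
    (s : (ι → 𝒳) → ι → ℝ) (f : 𝒳 → ℝ) (g : 𝒳 → 𝒳 → ℝ)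
    (hs : ∀ c i, 1 - s c i ≤ f (c i) + ∑ j ∈ Finset.univ.erase i, g (c j) (c i))
    {a b : ℝ} (hf : ∑ x, p x * f x ≤ a) (hg : ∑ x, ∑ y, p x * p y * g x y ≤ b) :
    ∑ c : ι → 𝒳, (∏ j, p (c j)) * (1 - (1 / (Fintype.card ι : ℝ)) * ∑ i, s c i)
      ≤ a + ((Fintype.card ι : ℝ) - 1) * b := by
  set N : ℝ := ↑(Fintype.card ι) with hN_def
  have hN : 0 < N := Nat.cast_pos.mpr Fintype.card_pos
  have hN1 : 0 ≤ N - 1 := sub_nonneg.mpr (Nat.one_le_cast.mpr Fintype.card_pos)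
  have havg : ∀ c : ι → 𝒳, 1 - (1 / N) * ∑ i, s c i = (1 / N) * ∑ i, (1 - s c i) := by
    intro c
    rw [Finset.sum_sub_distrib, Finset.sum_const, Finset.card_univ, nsmul_eq_mul, mul_one, ← hN_def]
    field_simp
  calc ∑ c : ι → 𝒳, (∏ j, p (c j)) * (1 - (1 / N) * ∑ i, s c i)
      = (1 / N) * ∑ i, ∑ c : ι → 𝒳, (∏ j, p (c j)) * (1 - s c i) := by
        simp_rw [havg, Finset.mul_sum]
        rw [Finset.sum_comm]
        exact Finset.sum_congr rfl fun i _ => Finset.sum_congr rfl fun c _ => by ring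
    _ ≤ (1 / N) * ∑ i : ι, (a + (N - 1) * b) := by
        gcongr with i
        calc ∑ c : ι → 𝒳, (∏ j, p (c j)) * (1 - s c i)
            ≤ ∑ c : ι → 𝒳, (∏ j, p (c j)) * (f (c i) + ∑ j ∈ Finset.univ.erase i, g (c j) (c i)) :=
              Finset.sum_le_sum fun c _ =>
                mul_le_mul_of_nonneg_left (hs c i) (Finset.prod_nonneg fun j _ => hp0 _)
          _ ≤ a + (N - 1) * b := by
              rw [sum_prod_mul_add_sum_erase hp]; gcongr
    _ = a + (N - 1) * b := by
        rw [Finset.sum_const, Finset.card_univ, nsmul_eq_mul, ← hN_def]; field_simp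
end Codebook

theorem sum_prod_mul_one_sub_average_prettyGoodMeasurement_le {ι 𝒳 n : Type*} [Fintype ι]
    [DecidableEq ι] [Nonempty ι] [Fintype 𝒳] [Fintype n] [DecidableEq n] {p : 𝒳 → ℝ}
    (hp0 : ∀ x, 0 ≤ p x) (hp1 : ∑ x, p x = 1) {ρ Γ : 𝒳 → Matrix n n ℂ} (hρ : ∀ x, 0 ≤ ρ x)
    (hρtr : ∀ x, (ρ x).trace = 1) (hΓ0 : ∀ x, 0 ≤ Γ x) (hΓ1 : ∀ x, Γ x ≤ 1) {κ δ η : ℝ}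
    (hκ : 0 < κ) (hΓρ : ∀ x, 1 - δ ≤ (Γ x * ρ x).trace.re)
    (hcross : ∑ x, ∑ y, p x * p y * (Γ x * ρ y).trace.re ≤ η) :
    ∑ c : ι → 𝒳, (∏ i, p (c i)) * (1 - (1 / (Fintype.card ι : ℝ)) *
        ∑ i, (prettyGoodMeasurement κ (Γ ∘ c) i * ρ (c i)).trace.re)
      ≤ 2 * δ + 4 * κ + ((Fintype.card ι : ℝ) - 1) * (4 * η) := by
  refine sum_prod_mul_one_sub_average_le hp0 hp1 _ (fun x => 2 * (1 - (Γ x * ρ x).trace.re) + 4 * κ)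
    (fun y x => 4 * (Γ y * ρ x).trace.re) (fun c i => ?_) ?_ ?_
  · have h := one_sub_re_trace_prettyGoodMeasurement_mul_le (Γ := Γ ∘ c) hκ (fun j => hΓ0 (c j))
      (hΓ1 (c i)) (hρ (c i)) (hρtr (c i))
    simp only [Function.comp_apply] at h
    rw [← Finset.mul_sum]
    linarith
  · calc _ ≤ ∑ x, p x * (2 * δ + 4 * κ) := Finset.sum_le_sum fun x _ =>
          mul_le_mul_of_nonneg_left (by linarith [hΓρ x]) (hp0 x)
      _ = _ := by rw [← Finset.sum_mul, hp1, one_mul]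
  · calc _ = 4 * ∑ x, ∑ y, p x * p y * (Γ x * ρ y).trace.re := by
          simp only [Finset.mul_sum]
          exact Finset.sum_congr rfl fun x _ => Finset.sum_congr rfl fun y _ => by ring
      _ ≤ 4 * η := by gcongr

theorem quantum_packing_lemma_general {𝒳 : Type} [Fintype 𝒳] {d : ℕ}
    (p : 𝒳 → ℝ) (hp0 : ∀ x, 0 ≤ p x) (hp1 : ∑ x, p x = 1)
    (ρ : 𝒳 → Matrix (Fin d) (Fin d) ℂ)
    (hρ : ∀ x, (ρ x).PosSemidef) (hρtr : ∀ x, (ρ x).trace = 1)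
    (Pr : Matrix (Fin d) (Fin d) ℂ) (Prx : 𝒳 → Matrix (Fin d) (Fin d) ℂ)
    (hPr : Pr.PosSemidef) (hPr1 : (1 - Pr).PosSemidef)
    (hPrx : ∀ x, (Prx x).PosSemidef) (hPrx1 : ∀ x, (1 - Prx x).PosSemidef)
    (ε : ℝ)
    (h H : ℝ)
    (cond1 : ∀ x, 1 - ε ≤ ((Pr * ρ x).trace).re)
    (cond2 : ∀ x, 1 - ε ≤ ((Prx x * ρ x).trace).re)
    (cond3 : ∀ x, ((Prx x).trace).re ≤ (2 : ℝ) ^ h)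
    (cond4 : ((((2 : ℝ) ^ (-H) : ℝ) : ℂ) • Pr
        - Pr * (∑ x, (p x : ℂ) • ρ x) * Pr).PosSemidef)
    (M : ℕ) (hM : 0 < M) :
    ∃ Λ : (Fin M → 𝒳) → Fin M → Matrix (Fin d) (Fin d) ℂ,
      (∀ c m, (Λ c m).PosSemidef) ∧
      (∀ c, (1 - ∑ m, Λ c m).PosSemidef) ∧
      ∑ c : Fin M → 𝒳, (∏ m, p (c m)) *
          (1 - (1 / (M : ℝ)) * ∑ m, ((Λ c m * ρ (c m)).trace).re)
        ≤ 2 * (ε + 2 * Real.sqrt ε) + 4 * (M : ℝ) * (2 : ℝ) ^ (-(H - h)) := by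
  set κ : ℝ := 2 ^ (-(H - h))
  have hκ : 0 < κ := by positivity
  set Γ : 𝒳 → Matrix (Fin d) (Fin d) ℂ := fun x => Pr * Prx x * Pr
  have hΓ0 : ∀ x, 0 ≤ Γ x := fun x => conjugate_nonneg_of_nonneg (hPrx x).nonneg hPr.nonneg
  have hΓ1 : ∀ x, Γ x ≤ 1 := fun x => conjugate_le_one hPr.nonneg hPr1 (hPrx1 x)
  have hΓρ : ∀ x, 1 - (ε + 2 * √ε) ≤ (Γ x * ρ x).trace.re := fun x => by
    rw [← sub_sub]
    exact sub_two_mul_sqrt_le_re_trace_conj_mul hPr.nonneg hPr1 (hPrx x).nonneg (hPrx1 x)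
      (hρ x).nonneg (hρtr x) (cond1 x) (cond2 x)
  have hcross : ∑ x, ∑ y, p x * p y * (Γ x * ρ y).trace.re ≤ κ := by
    simp only [Complex.coe_smul] at cond4
    calc _ ≤ (2 : ℝ) ^ (-H) * 2 ^ h :=
          sum_sum_mul_re_trace_conj_mul_le hp0 hp1 Prx ρ hPr1 (fun x => (hPrx x).nonneg)
            (by positivity) cond4 cond3
      _ = κ := by rw [← Real.rpow_add two_pos, neg_add_eq_sub, ← neg_sub]
  have : Nonempty (Fin M) := ⟨⟨0, hM⟩⟩
  refine ⟨fun c => prettyGoodMeasurement κ (Γ ∘ c), fun c m => ?_, fun c => ?_, ?_⟩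
  · exact (prettyGoodMeasurement_nonneg (κ := κ) (Γ := Γ ∘ c) (hΓ0 (c m))).posSemidef
  · exact Matrix.le_iff.mp (sum_prettyGoodMeasurement_le_one (Γ := Γ ∘ c) hκ fun m => hΓ0 (c m))
  have key := sum_prod_mul_one_sub_average_prettyGoodMeasurement_le (ι := Fin M) hp0 hp1
    (fun x => (hρ x).nonneg) hρtr hΓ0 hΓ1 hκ hΓρ hcross
  rw [Fintype.card_fin] at key
  exact key.trans_eq (by ring)

/-- **Quantum Packing Lemma.** Given an ensemble `{p x, ρ x}` of density matrices with
average state `ρ̄ = ∑ x, p x • ρ x`, and projector-like operators `Pr`, `Prx x` with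
`0 ≤ Pr ≤ 1`, `0 ≤ Prx x ≤ 1` satisfying the packing conditions
`Re tr(Pr ρ_x) ≥ 1 - ε`, `Re tr(Prx x ρ_x) ≥ 1 - ε`, `Re tr(Prx x) ≤ 2^h`, and
`Pr ρ̄ Pr ≤ 2^(-H) Pr`, then for every codebook size `M` there exists, for each codebook
`c : Fin M → 𝒳`, a POVM `{Λ c m}` whose expected average error probability over an
i.i.d. codebook is at most `2(ε + 2√ε) + 4 M 2^{-(H-h)}`. -/
theorem quantum_packing_lemma {𝒳 : Type} [Fintype 𝒳] [DecidableEq 𝒳] {d : ℕ}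
    (p : 𝒳 → ℝ) (hp0 : ∀ x, 0 ≤ p x) (hp1 : ∑ x, p x = 1)
    (ρ : 𝒳 → Matrix (Fin d) (Fin d) ℂ)
    (hρ : ∀ x, (ρ x).PosSemidef) (hρtr : ∀ x, (ρ x).trace = 1)
    (Pr : Matrix (Fin d) (Fin d) ℂ) (Prx : 𝒳 → Matrix (Fin d) (Fin d) ℂ)
    (hPr : Pr.PosSemidef) (hPr1 : (1 - Pr).PosSemidef)
    (hPrx : ∀ x, (Prx x).PosSemidef) (hPrx1 : ∀ x, (1 - Prx x).PosSemidef)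
    (ε : ℝ) (hε0 : 0 < ε) (hε1 : ε < 1)
    (h H : ℝ) (hh : 0 < h) (hhH : h < H)
    (cond1 : ∀ x, 1 - ε ≤ ((Pr * ρ x).trace).re)
    (cond2 : ∀ x, 1 - ε ≤ ((Prx x * ρ x).trace).re)
    (cond3 : ∀ x, ((Prx x).trace).re ≤ (2 : ℝ) ^ h)
    (cond4 : ((((2 : ℝ) ^ (-H) : ℝ) : ℂ) • Pr
        - Pr * (∑ x, (p x : ℂ) • ρ x) * Pr).PosSemidef)
    (M : ℕ) (hM : 0 < M) :
    ∃ Λ : (Fin M → 𝒳) → Fin M → Matrix (Fin d) (Fin d) ℂ,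
      (∀ c m, (Λ c m).PosSemidef) ∧
      (∀ c, (1 - ∑ m, Λ c m).PosSemidef) ∧
      ∑ c : Fin M → 𝒳, (∏ m, p (c m)) *
          (1 - (1 / (M : ℝ)) * ∑ m, ((Λ c m * ρ (c m)).trace).re)
        ≤ 2 * (ε + 2 * Real.sqrt ε) + 4 * (M : ℝ) * (2 : ℝ) ^ (-(H - h)) :=
  quantum_packing_lemma_general p hp0 hp1 ρ hρ hρtr Pr Prx hPr hPr1 hPrx hPrx1 ε h H cond1 cond2
    cond3 cond4 M hM
end
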